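/- arXiv:0705.3729 — 2 statements merged into one kernel-verified Lean document; each statement's English description precedes it below -/
import Mathlib

section
/- For every integer N ≥ 5, (5N−3)/(3(N−1)³) > (N−3)(15N²−15N+4)/(3(3N−4)(N−1)⁴) > 1/(N−1)². (Equivalently, the eigenvalues of the correlation operator K of the N-particle Kac model satisfy κ_{1,1}(N) > κ_{2,0}(N) > κ_{0,2}(N) for N ≥ 5.) -/
open scoped BigOperators

noncomputable section

/-- The generalized binomial coefficient `binom(r, k) = r(r-1)⋯(r-k+1)/k!`. -/
def genBinom (r : ℝ) (k : ℕ) : ℝ := (∏ i ∈ Finset.range k, (r - i)) / k.factorial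

/-- The Jacobi polynomial `P_n^{(α,β)}`, normalized (as by Rodrigues' formula)
so that `P_n^{(α,β)}(1) = binom(n+α, n)`. -/
def jacobiP (α β : ℝ) (n : ℕ) (x : ℝ) : ℝ :=
  2⁻¹ ^ n * ∑ s ∈ Finset.range (n + 1),
    genBinom ((n : ℝ) + α) (n - s) * genBinom ((n : ℝ) + β) s *
      (x - 1) ^ s * (x + 1) ^ (n - s)

/-- The eigenvalue `κ_{n,ℓ}(N)` of the correlation operator of the `N`-particle
Kac model:
`κ_{n,ℓ}(N) = [P_n^{(α,β)}(-1+2/(N-1)²)/P_n^{(α,β)}(1)]·(-1/(N-1))^ℓ`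
with `α = (3N-8)/2` and `β = ℓ + 1/2`. -/
def kacKappa (N n ℓ : ℕ) : ℝ :=
  jacobiP ((3 * (N : ℝ) - 8) / 2) ((ℓ : ℝ) + 1 / 2) n (-1 + 2 / ((N : ℝ) - 1) ^ 2) /
      jacobiP ((3 * (N : ℝ) - 8) / 2) ((ℓ : ℝ) + 1 / 2) n 1 *
    (-1 / ((N : ℝ) - 1)) ^ ℓ

lemma jacobiP_one_eval (α β x : ℝ) :
    jacobiP α β 1 x = ((1 + α) * (x + 1) + (1 + β) * (x - 1)) / 2 := by
  unfold jacobiP genBinom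
  simp [Finset.sum_range_succ, Finset.prod_range_succ]
  ring

lemma jacobiP_two_eval (α β x : ℝ) :
    jacobiP α β 2 x = ((2 + α) * (1 + α) * (x + 1) ^ 2 +
      2 * (2 + α) * (2 + β) * (x - 1) * (x + 1) + (2 + β) * (1 + β) * (x - 1) ^ 2) / 8 := by
  unfold jacobiP genBinom
  simp [Finset.sum_range_succ, Finset.prod_range_succ]
  norm_num
  ring

lemma jacobiP_zero_eval (α β x : ℝ) : jacobiP α β 0 x = 1 := by
  unfold jacobiP genBinom
  simp

/-- **Lemma 7.2.** For every `N ≥ 5`,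
`κ_{1,1}(N) = (5N-3)/(3(N-1)³) > κ_{2,0}(N) = (N-3)(15N²-15N+4)/(3(3N-4)(N-1)⁴)
 > κ_{0,2}(N) = 1/(N-1)²`. -/
theorem kappa_order (N : ℕ) (hN : 5 ≤ N) :
    kacKappa N 1 1 = (5 * (N : ℝ) - 3) / (3 * ((N : ℝ) - 1) ^ 3) ∧
    kacKappa N 2 0 =
      ((N : ℝ) - 3) * (15 * (N : ℝ) ^ 2 - 15 * N + 4) /
        (3 * (3 * (N : ℝ) - 4) * ((N : ℝ) - 1) ^ 4) ∧
    kacKappa N 0 2 = 1 / ((N : ℝ) - 1) ^ 2 ∧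
    (5 * (N : ℝ) - 3) / (3 * ((N : ℝ) - 1) ^ 3) >
      ((N : ℝ) - 3) * (15 * (N : ℝ) ^ 2 - 15 * N + 4) /
        (3 * (3 * (N : ℝ) - 4) * ((N : ℝ) - 1) ^ 4) ∧
    ((N : ℝ) - 3) * (15 * (N : ℝ) ^ 2 - 15 * N + 4) /
        (3 * (3 * (N : ℝ) - 4) * ((N : ℝ) - 1) ^ 4) >
      1 / ((N : ℝ) - 1) ^ 2 := by
  have hN5 : (5:ℝ) ≤ (N:ℝ) := by exact_mod_cast hN
  have h1 : ((N:ℝ) - 1) ≠ 0 := by nlinarith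
  have h2 : (3*(N:ℝ) - 6) ≠ 0 := by nlinarith
  have h4 : (3*(N:ℝ) - 4) ≠ 0 := by nlinarith
  have p1 : (0:ℝ) < (N:ℝ) - 1 := by nlinarith
  have pN : (0:ℝ) < (N:ℝ) := by nlinarith
  refine ⟨?_, ?_, ?_, ?_, ?_⟩
  · -- κ_{1,1}
    rw [kacKappa, jacobiP_one_eval, jacobiP_one_eval]
    have hA : ((1 + (3 * (N : ℝ) - 8) / 2) *
          ((-1 + 2 / ((N : ℝ) - 1) ^ 2) + 1) +
        (1 + (((1:ℕ) : ℝ) + 1 / 2)) * ((-1 + 2 / ((N : ℝ) - 1) ^ 2) - 1)) / 2 =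
        (-5 * (N:ℝ)^2 + 13 * N - 6) / (2 * ((N:ℝ) - 1)^2) := by
      field_simp
      ring
    have hB : ((1 + (3 * (N : ℝ) - 8) / 2) * ((1:ℝ) + 1) +
        (1 + (((1:ℕ) : ℝ) + 1 / 2)) * ((1:ℝ) - 1)) / 2 = (3 * (N:ℝ) - 6) / 2 := by
      push_cast; ring
    rw [hA, hB]
    rw [pow_one, div_div_div_eq, div_mul_div_comm,
      div_eq_div_iff (by nlinarith [pow_pos p1 3]) (by positivity)]
    ring
  · -- κ_{2,0}
    rw [kacKappa, jacobiP_two_eval, jacobiP_two_eval]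
    have hA : ((2 + (3 * (N : ℝ) - 8) / 2) * (1 + (3 * (N : ℝ) - 8) / 2) *
          ((-1 + 2 / ((N : ℝ) - 1) ^ 2) + 1) ^ 2 +
        2 * (2 + (3 * (N : ℝ) - 8) / 2) * (2 + (((0:ℕ) : ℝ) + 1 / 2)) *
          ((-1 + 2 / ((N : ℝ) - 1) ^ 2) - 1) * ((-1 + 2 / ((N : ℝ) - 1) ^ 2) + 1) +
        (2 + (((0:ℕ) : ℝ) + 1 / 2)) * (1 + (((0:ℕ) : ℝ) + 1 / 2)) *
          ((-1 + 2 / ((N : ℝ) - 1) ^ 2) - 1) ^ 2) / 8 =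
        (15 * (N:ℝ)^4 - 90 * (N:ℝ)^3 + 169 * (N:ℝ)^2 - 110 * N + 24) /
          (8 * ((N:ℝ) - 1)^4) := by
      field_simp
      ring
    have hB : ((2 + (3 * (N : ℝ) - 8) / 2) * (1 + (3 * (N : ℝ) - 8) / 2) * ((1:ℝ) + 1) ^ 2 +
        2 * (2 + (3 * (N : ℝ) - 8) / 2) * (2 + (((0:ℕ) : ℝ) + 1 / 2)) *
          ((1:ℝ) - 1) * ((1:ℝ) + 1) +
        (2 + (((0:ℕ) : ℝ) + 1 / 2)) * (1 + (((0:ℕ) : ℝ) + 1 / 2)) * ((1:ℝ) - 1) ^ 2) / 8 =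
        (3 * (N:ℝ) - 4) * (3 * (N:ℝ) - 6) / 8 := by
      push_cast; ring
    rw [hA, hB]
    have d20 : (0:ℝ) < 8 * ((N:ℝ) - 1) ^ 4 * ((3 * (N:ℝ) - 4) * (3 * (N:ℝ) - 6)) :=
      mul_pos (by positivity) (mul_pos (by nlinarith) (by nlinarith))
    rw [pow_zero, mul_one, div_div_div_eq,
      div_eq_div_iff d20.ne' (by nlinarith [pow_pos p1 4])]
    ring
  · -- κ_{0,2}
    rw [kacKappa, jacobiP_zero_eval, jacobiP_zero_eval]
    field_simp
  · rw [gt_iff_lt, div_lt_div_iff₀ (by nlinarith [pow_pos p1 4]) (by positivity)]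
    nlinarith [pow_pos p1 3, mul_pos pN (pow_pos p1 3), sq_nonneg ((N:ℝ) - 1),
      mul_pos (mul_pos pN (pow_pos p1 3)) (show (0:ℝ) < 2*(N:ℝ) - 1 by nlinarith)]
  · rw [gt_iff_lt, div_lt_div_iff₀ (by positivity) (by nlinarith [pow_pos p1 4])]
    nlinarith [pow_pos p1 2, mul_pos pN (pow_pos p1 2),
      mul_pos (mul_pos pN (pow_pos p1 2)) (show (0:ℝ) < 3*(N:ℝ)^2 - 15*N + 8 by nlinarith)]
end
end

section
/- For every integer N ≥ 3, every integer ℓ with 2 ≤ ℓ < (3N−9)/2, and every integer n > 0, one has |κ_{n,ℓ}(N)| < 1/(N−1)². -/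
open scoped BigOperators

noncomputable section

open Polynomial

namespace KacAux

lemma genBinom_zero (r : ℝ) : genBinom r 0 = 1 := by simp [genBinom]

lemma genBinom_succ (r : ℝ) (k : ℕ) :
    ((k : ℝ) + 1) * genBinom r (k + 1) = (r - k) * genBinom r k := by
  unfold genBinom
  rw [Finset.prod_range_succ, Nat.factorial_succ]
  have h1 : (k.factorial : ℝ) ≠ 0 := by exact_mod_cast k.factorial_ne_zero
  push_cast
  field_simp

def T (s m : ℕ) : ℝ[X] := (X - 1) ^ s * (X + 1) ^ m

def E (α β : ℝ) (n s : ℕ) : ℝ := genBinom ((n:ℝ)+α) (n-s) * genBinom ((n:ℝ)+β) s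

def Qp (α β : ℝ) (n : ℕ) : ℝ[X] := ∑ s ∈ Finset.range (n+1), C (E α β n s) * T s (n-s)

lemma relE1 (α β : ℝ) {n s : ℕ} (h : s < n) :
    ((s:ℝ)+1) * (α + (s:ℝ) + 1) * E α β n (s+1) = ((n:ℝ)-s) * ((n:ℝ)+β-s) * E α β n s := by
  have ha := genBinom_succ ((n:ℝ)+β) s
  have hb := genBinom_succ ((n:ℝ)+α) (n-s-1)
  have e1 : n - s - 1 + 1 = n - s := by omega
  have e2 : ((n - s - 1 : ℕ) : ℝ) = (n:ℝ) - s - 1 := by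
    rw [show n - s - 1 = n - (s+1) from by omega, Nat.cast_sub h]
    push_cast; ring
  rw [e1, e2] at hb
  unfold E
  rw [show n - (s+1) = n - s - 1 from by omega]
  linear_combination ((α+(s:ℝ)+1) * genBinom ((n:ℝ)+α) (n-s-1)) * ha
    + (-(((n:ℝ)+β-s)) * genBinom ((n:ℝ)+β) s) * hb


lemma key_pow (p : ℝ[X]) (hp : derivative p = 1) (k : ℕ) :
    p * derivative (p ^ k) = C (k : ℝ) * p ^ k := by
  cases k with
  | zero => simp
  | succ k =>
    rw [derivative_pow, hp, mul_one, Nat.add_sub_cancel, pow_succ]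
    ring

lemma fact1 (s m : ℕ) :
    ((X - 1) * (X + 1)) * derivative (T s m)
      = (C (s : ℝ) * (X + 1) + C (m : ℝ) * (X - 1)) * T s m := by
  have h1 : (X - 1 : ℝ[X]) * derivative ((X - 1) ^ s) = C (s : ℝ) * (X - 1) ^ s :=
    key_pow _ (by simp) s
  have h2 : (X + 1 : ℝ[X]) * derivative ((X + 1) ^ m) = C (m : ℝ) * (X + 1) ^ m :=
    key_pow _ (by simp) m
  unfold T
  rw [derivative_mul]
  linear_combination ((X + 1 : ℝ[X]) ^ m * (X + 1)) * h1 + ((X - 1 : ℝ[X]) ^ s * (X - 1)) * h2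

lemma fact2 (s m : ℕ) :
    ((X - 1) * (X + 1)) * (((X - 1) * (X + 1)) * derivative (derivative (T s m)))
      = (C ((s : ℝ) + m) * ((X - 1) * (X + 1))
          + (C (s : ℝ) * (X + 1) + C (m : ℝ) * (X - 1) - 2 * X)
            * (C (s : ℝ) * (X + 1) + C (m : ℝ) * (X - 1))) * T s m := by
  have h1 := fact1 s m
  have h3 := congrArg derivative h1
  simp only [derivative_mul, derivative_add, derivative_sub, derivative_one, derivative_X,
    derivative_C, mul_one, one_mul, zero_mul, mul_zero, add_zero, zero_add, sub_zero,
    zero_sub, C_add] at h3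
  rw [C_add]
  linear_combination ((X - 1 : ℝ[X]) * (X + 1)) * h3
    + (C (s : ℝ) * (X + 1) + C (m : ℝ) * (X - 1) - 2 * X) * h1



lemma L_T (α β lam : ℝ) (s m : ℕ) :
    ((X - 1) * (X + 1)) *
      ((1 - X ^ 2) * derivative (derivative (T s m))
        + (C (β - α) - C (α + β + 2) * X) * derivative (T s m) + C lam * T s m)
    = C (-((s:ℝ) * ((s:ℝ) + α))) * T s (m + 2)
      + C (lam - 2*(s:ℝ)*(m:ℝ) - (β+1)*(s:ℝ) - (α+1)*(m:ℝ)) * T (s+1) (m+1)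
      + C (-((m:ℝ) * ((m:ℝ) + β))) * T (s+2) m := by
  have h1 := fact1 s m
  have h2 := fact2 s m
  simp only [T] at h1 h2 ⊢
  simp only [map_sub, map_add, map_mul, map_neg, map_one, map_ofNat, C_1] at h1 h2 ⊢
  linear_combination (-1 : ℝ[X]) * h2 + (C β - C α - (C α + C β + 2) * X) * h1


end KacAux


namespace KacAux

lemma ode_mul (α β : ℝ) (n : ℕ) :
    ((X-1)*(X+1)) * ((1 - X^2) * derivative (derivative (Qp α β n))
      + (C (β-α) - C (α+β+2) * X) * derivative (Qp α β n)
      + C ((n:ℝ)*((n:ℝ)+α+β+1)) * Qp α β n) = 0 := by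
  set lam : ℝ := (n:ℝ)*((n:ℝ)+α+β+1) with hlam
  have expand : ((X-1)*(X+1)) * ((1 - X^2) * derivative (derivative (Qp α β n))
      + (C (β-α) - C (α+β+2) * X) * derivative (Qp α β n)
      + C lam * Qp α β n)
      = ∑ s ∈ Finset.range (n+1), C (E α β n s) *
        ( ((X-1)*(X+1)) * ((1-X^2) * derivative (derivative (T s (n-s)))
          + (C (β-α) - C (α+β+2)*X) * derivative (T s (n-s)) + C lam * T s (n-s)) ) := by
    rw [Qp]
    simp only [derivative_sum, derivative_C_mul, Finset.mul_sum, ← Finset.sum_add_distrib]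
    exact Finset.sum_congr rfl (fun s _ => by ring)
  rw [expand]
  have step2 : ∀ s ∈ Finset.range (n+1), C (E α β n s) *
        ( ((X-1)*(X+1)) * ((1-X^2) * derivative (derivative (T s (n-s)))
          + (C (β-α) - C (α+β+2)*X) * derivative (T s (n-s)) + C lam * T s (n-s)) )
      = C (E α β n s * (-((s:ℝ)*((s:ℝ)+α)))) * T s (n-s+2)
        + C (E α β n s * (lam - 2*(s:ℝ)*((n:ℝ)-s) - (β+1)*(s:ℝ) - (α+1)*((n:ℝ)-s))) * T (s+1) (n-s+1)
        + C (E α β n s * (-((((n:ℝ)-s))*(((n:ℝ)-s)+β)))) * T (s+2) (n-s) := by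
    intro s hs
    have hsn : s ≤ n := Nat.lt_succ_iff.mp (Finset.mem_range.mp hs)
    have hc : ((n - s : ℕ) : ℝ) = (n:ℝ) - s := Nat.cast_sub hsn
    rw [L_T α β lam s (n-s), hc]
    simp only [map_mul, map_neg]
    ring
  rw [Finset.sum_congr rfl step2]
  rw [Finset.sum_add_distrib, Finset.sum_add_distrib]
  have hS1 : ∑ s ∈ Finset.range (n+1), C (E α β n s * (-((s:ℝ)*((s:ℝ)+α)))) * T s (n-s+2)
      = ∑ j ∈ Finset.range (n+1),
          C (E α β n j * (-(((n:ℝ)-j)*((n:ℝ)+β-j)))) * T (j+1) (n-j+1) := by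
    rw [Finset.sum_range_succ' (fun s => C (E α β n s * (-((s:ℝ)*((s:ℝ)+α)))) * T s (n-s+2)) n]
    rw [Finset.sum_range_succ (fun j => C (E α β n j * (-(((n:ℝ)-j)*((n:ℝ)+β-j)))) * T (j+1) (n-j+1)) n]
    have h0 : C (E α β n 0 * (-((0:ℕ):ℝ)*(((0:ℕ):ℝ)+α))) * T 0 (n-0+2) = 0 := by
      simp
    have hn : C (E α β n n * (-(((n:ℝ)-n)*((n:ℝ)+β-n)))) * T (n+1) (n-n+1) = 0 := by
      simp
    rw [hn]
    simp only [Nat.cast_zero, neg_zero, zero_mul, mul_zero, map_zero]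
    rw [add_zero, add_zero]
    refine Finset.sum_congr rfl (fun j hj => ?_)
    have hjn : j < n := Finset.mem_range.mp hj
    have hT : n - (j+1) + 2 = n - j + 1 := by omega
    rw [hT]
    have hco : E α β n (j+1) * (-(((j+1:ℕ):ℝ)*(((j+1:ℕ):ℝ)+α)))
        = E α β n j * (-(((n:ℝ)-j)*((n:ℝ)+β-j))) := by
      have := relE1 α β hjn
      push_cast
      linear_combination -this
    rw [hco]
  have hS3 : ∑ s ∈ Finset.range (n+1), C (E α β n s * (-((((n:ℝ)-s))*(((n:ℝ)-s)+β)))) * T (s+2) (n-s)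
      = ∑ j ∈ Finset.range (n+1),
          C (E α β n j * (-((j:ℝ)*((j:ℝ)+α)))) * T (j+1) (n-j+1) := by
    rw [Finset.sum_range_succ (fun s => C (E α β n s * (-((((n:ℝ)-s))*(((n:ℝ)-s)+β)))) * T (s+2) (n-s)) n]
    rw [Finset.sum_range_succ' (fun j => C (E α β n j * (-((j:ℝ)*((j:ℝ)+α)))) * T (j+1) (n-j+1)) n]
    have hn0 : C (E α β n n * (-((((n:ℝ)-n))*(((n:ℝ)-n)+β)))) * T (n+2) (n-n) = 0 := by
      simp
    have h00 : C (E α β n 0 * (-((0:ℕ):ℝ)*(((0:ℕ):ℝ)+α))) * T (0+1) (n-0+1) = 0 := by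
      simp
    rw [hn0, add_zero]
    simp only [Nat.cast_zero, neg_zero, zero_mul, mul_zero, map_zero]
    rw [add_zero]
    refine Finset.sum_congr rfl (fun j hj => ?_)
    have hjn : j < n := Finset.mem_range.mp hj
    have hT : n - (j+1) + 1 = n - j := by omega
    rw [hT]
    have hco : E α β n j * (-((((n:ℝ)-j))*(((n:ℝ)-j)+β)))
        = E α β n (j+1) * (-(((j+1:ℕ):ℝ)*(((j+1:ℕ):ℝ)+α))) := by
      have := relE1 α β hjn
      push_cast
      linear_combination this
    rw [hco]
  rw [hS1, hS3]
  rw [← Finset.sum_add_distrib, ← Finset.sum_add_distrib]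
  apply Finset.sum_eq_zero
  intro j hj
  rw [← add_mul, ← add_mul, ← C_add, ← C_add]
  have hz : E α β n j * (-(((n:ℝ)-j)*((n:ℝ)+β-j)))
      + E α β n j * (lam - 2*(j:ℝ)*((n:ℝ)-j) - (β+1)*(j:ℝ) - (α+1)*((n:ℝ)-j))
      + E α β n j * (-((j:ℝ)*((j:ℝ)+α))) = 0 := by
    rw [hlam]; ring
  rw [hz, C_0, zero_mul]

lemma ode (α β : ℝ) (n : ℕ) :
    (1 - X^2) * derivative (derivative (Qp α β n))
      + (C (β-α) - C (α+β+2) * X) * derivative (Qp α β n)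
      + C ((n:ℝ)*((n:ℝ)+α+β+1)) * Qp α β n = 0 := by
  have h := ode_mul α β n
  have hW : ((X-1)*(X+1) : ℝ[X]) ≠ 0 := fun hcon => by
    have := congrArg (eval 2) hcon
    norm_num at this
  exact (mul_eq_zero.mp h).resolve_left hW

end KacAux

namespace KacAux

lemma hp_deriv (α β : ℝ) (n : ℕ) :
    derivative (C ((n:ℝ)*((n:ℝ)+α+β+1)) * (Qp α β n)^2 + (1 - X^2) * (derivative (Qp α β n))^2)
    = 2 * (C (α-β) + C (α+β+1) * X) * (derivative (Qp α β n))^2 := by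
  have h := ode α β n
  simp only [map_sub, map_add, map_mul, map_one, map_ofNat, C_1] at h ⊢
  simp only [derivative_add, derivative_mul, derivative_pow, derivative_sub, derivative_one,
    derivative_X, derivative_C, map_ofNat, Nat.cast_ofNat, pow_one, mul_one, zero_mul,
    mul_zero, add_zero, zero_add, zero_sub, sub_zero]
  linear_combination (2 * derivative (Qp α β n)) * h

lemma eval_Qp (α β x : ℝ) (n : ℕ) :
    eval x (Qp α β n) = ∑ s ∈ Finset.range (n+1),
      E α β n s * ((x-1)^s * (x+1)^(n-s)) := by
  simp [Qp, T, eval_finset_sum]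

lemma jacobiP_eq (α β x : ℝ) (n : ℕ) :
    jacobiP α β n x = 2⁻¹ ^ n * eval x (Qp α β n) := by
  rw [eval_Qp, jacobiP]
  congr 1
  exact Finset.sum_congr rfl (fun s _ => by rw [E]; ring)

lemma eval_Qp_one (α β : ℝ) (n : ℕ) :
    eval 1 (Qp α β n) = genBinom ((n:ℝ)+α) n * 2^n := by
  rw [eval_Qp]
  rw [Finset.sum_eq_single_of_mem 0 (Finset.mem_range.mpr (Nat.succ_pos n))]
  · norm_num [E, genBinom_zero]
  · intro s _ hs
    rw [show (1:ℝ)-1 = 0 from by norm_num, zero_pow hs]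
    ring

lemma eval_Qp_negone (α β : ℝ) (n : ℕ) :
    eval (-1) (Qp α β n) = genBinom ((n:ℝ)+β) n * (-2)^n := by
  rw [eval_Qp]
  rw [Finset.sum_eq_single_of_mem n (Finset.mem_range.mpr (Nat.lt_succ_self n))]
  · norm_num [E, genBinom_zero]
  · intro s hs hsne
    have : 0 < n - s := by
      have := Finset.mem_range.mp hs
      omega
    rw [show (-1:ℝ)+1 = 0 from by norm_num, zero_pow (Nat.pos_iff_ne_zero.mp this)]
    ring

lemma genBinom_pos {γ : ℝ} (hγ : -1 < γ) (n k : ℕ) (hk : k ≤ n) :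
    0 < genBinom ((n:ℝ)+γ) k := by
  unfold genBinom
  apply div_pos
  · apply Finset.prod_pos
    intro i hi
    have hi' : i < k := Finset.mem_range.mp hi
    have : (i:ℝ) ≤ (n:ℝ) - 1 := by
      have : i + 1 ≤ n := by omega
      have := (Nat.cast_le (α := ℝ)).mpr this
      push_cast at this
      linarith
    linarith
  · exact_mod_cast k.factorial_pos

lemma genBinom_lt {γ δ : ℝ} (hγ : -1 < γ) (hgd : γ < δ) (n : ℕ) (hn : 0 < n) :
    genBinom ((n:ℝ)+γ) n < genBinom ((n:ℝ)+δ) n := by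
  unfold genBinom
  rw [div_lt_div_iff_of_pos_right (by exact_mod_cast n.factorial_pos)]
  apply Finset.prod_lt_prod_of_nonempty
  · intro i hi
    have hi' : i < n := Finset.mem_range.mp hi
    have : (i:ℝ) ≤ (n:ℝ) - 1 := by
      have h2 : i + 1 ≤ n := by omega
      have h3 := (Nat.cast_le (α := ℝ)).mpr h2
      push_cast at h3
      linarith
    linarith
  · intro i _
    linarith
  · exact ⟨0, Finset.mem_range.mpr hn⟩

end KacAux

namespace KacAux

lemma key (α β : ℝ) (n : ℕ) (hn : 0 < n) (hb : (-1:ℝ) < β) (hab : β < α)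
    (x0 : ℝ) (hx0 : -1 ≤ x0) (hx1 : x0 ≤ 1) (hs : 0 < α+β+1)
    (hxc : x0 ≤ (β-α)/(α+β+1)) :
    (eval x0 (Qp α β n))^2 ≤ (eval (-1) (Qp α β n))^2 := by
  set lam : ℝ := (n:ℝ)*((n:ℝ)+α+β+1) with hlam
  have hlampos : 0 < lam := by
    apply mul_pos
    · exact_mod_cast hn
    · have : (1:ℝ) ≤ (n:ℝ) := by exact_mod_cast hn
      linarith
  set c : ℝ := (β-α)/(α+β+1) with hc
  set P : ℝ[X] := C lam * (Qp α β n)^2 + (1 - X^2) * (derivative (Qp α β n))^2 with hP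
  have hanti : AntitoneOn (fun x => eval x P) (Set.Icc (-1) c) := by
    apply antitoneOn_of_deriv_nonpos (convex_Icc _ _)
    · exact (Polynomial.continuous P).continuousOn
    · exact (Polynomial.differentiable P).differentiableOn
    · intro x hx
      rw [interior_Icc, Set.mem_Ioo] at hx
      rw [Polynomial.deriv, hP, hp_deriv]
      have hxle : x * (α+β+1) ≤ β - α := by
        have := hx.2.le
        rw [hc, le_div_iff₀ hs] at this
        exact this
      have hfac : α - β + (α+β+1) * x ≤ 0 := by nlinarith
      simp only [eval_mul, eval_add, eval_ofNat, eval_C, eval_X, eval_pow]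
      nlinarith [sq_nonneg (eval x (derivative (Qp α β n)))]
  have hmem1 : (-1:ℝ) ∈ Set.Icc (-1:ℝ) c := ⟨le_refl _, le_trans hx0 hxc⟩
  have hmem2 : x0 ∈ Set.Icc (-1:ℝ) c := ⟨hx0, hxc⟩
  have hHle : eval x0 P ≤ eval (-1) P := hanti hmem1 hmem2 hx0
  have hH1 : eval (-1) P = lam * (eval (-1) (Qp α β n))^2 := by
    simp [hP]
  have hH0 : lam * (eval x0 (Qp α β n))^2 ≤ eval x0 P := by
    rw [hP]
    simp only [eval_add, eval_mul, eval_C, eval_pow, eval_sub, eval_one, eval_X]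
    nlinarith [sq_nonneg (eval x0 (derivative (Qp α β n))),
      mul_nonneg (mul_nonneg (by linarith : (0:ℝ) ≤ 1 - x0) (by linarith : (0:ℝ) ≤ 1 + x0))
        (sq_nonneg (eval x0 (derivative (Qp α β n))))]
  have : lam * (eval x0 (Qp α β n))^2 ≤ lam * (eval (-1) (Qp α β n))^2 := by
    calc lam * (eval x0 (Qp α β n))^2 ≤ eval x0 P := hH0
    _ ≤ eval (-1) P := hHle
    _ = lam * (eval (-1) (Qp α β n))^2 := hH1
  exact le_of_mul_le_mul_left this hlampos

end KacAux


open KacAux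

/-- **Lemma 8.2 (via Koornwinder's formula).** For every `N ≥ 3`, every `ℓ` with
`2 ≤ ℓ < (3N-9)/2`, and every `n > 0`, `|κ_{n,ℓ}(N)| < 1/(N-1)²`. -/
theorem kappa_koornwinder_bound (N n ℓ : ℕ) (hN : 3 ≤ N) (hl2 : 2 ≤ ℓ)
    (hl : (ℓ : ℝ) < (3 * (N : ℝ) - 9) / 2) (hn : 0 < n) :
    |kacKappa N n ℓ| < 1 / ((N : ℝ) - 1) ^ 2 := by
  have hl2r : (2:ℝ) ≤ (ℓ:ℝ) := by exact_mod_cast hl2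
  have hN5 : (5:ℝ) ≤ (N:ℝ) := by
    have h4 : (4:ℝ) < (N:ℝ) := by linarith
    have : 4 < N := by exact_mod_cast h4
    exact_mod_cast this
  unfold kacKappa
  set M : ℝ := (N:ℝ) with hM
  set α : ℝ := (3*M-8)/2 with hα
  set β : ℝ := (ℓ:ℝ) + 1/2 with hβ
  set x0 : ℝ := -1 + 2/(M-1)^2 with hx0def
  have hMm1 : (0:ℝ) < (M-1)^2 := by nlinarith
  have hM1pos : (0:ℝ) < M - 1 := by linarith
  have hb : (-1:ℝ) < β := by
    have : (0:ℝ) ≤ (ℓ:ℝ) := Nat.cast_nonneg ℓ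
    rw [hβ]; linarith
  have hab : β < α := by rw [hα, hβ]; linarith
  have hs : (0:ℝ) < α + β + 1 := by rw [hα, hβ]; linarith
  have hupos : (0:ℝ) < 2/(M-1)^2 := by positivity
  have hu16 : 2/(M-1)^2 ≤ 2/16 := by
    apply div_le_div_of_nonneg_left (by norm_num) (by norm_num)
    nlinarith
  have hx0a : (-1:ℝ) ≤ x0 := by rw [hx0def]; linarith
  have hx01 : x0 ≤ 1 := by rw [hx0def]; linarith
  have hxc : x0 ≤ (β - α)/(α + β + 1) := by
    rw [le_div_iff₀ hs]
    have hpoly : 2*(α+β+1) ≤ (2*β+1) * (M-1)^2 := by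
      rw [hα, hβ]; nlinarith
    have hstep : (2/(M-1)^2)*(α+β+1) ≤ 2*β+1 := by
      rw [div_mul_eq_mul_div, div_le_iff₀ hMm1]; linarith
    rw [hx0def]; nlinarith
  have hkey := key α β n hn hb hab x0 hx0a hx01 hs hxc
  set A : ℝ := genBinom ((n:ℝ)+α) n with hAdef
  set B : ℝ := genBinom ((n:ℝ)+β) n with hBdef
  have hApos : 0 < A := genBinom_pos (by linarith) n n le_rfl
  have hBpos : 0 < B := genBinom_pos hb n n le_rfl
  have hBA : B < A := genBinom_lt hb hab n hn
  have hsqeq : (eval (-1) (Qp α β n))^2 = (B * 2^n)^2 := by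
    rw [eval_Qp_negone, ← hBdef, mul_pow, mul_pow, ← pow_mul, ← pow_mul,
      mul_comm n 2, pow_mul, pow_mul]
    norm_num
  have habs : |eval x0 (Qp α β n)| ≤ B * 2^n := by
    rw [hsqeq] at hkey
    have hBn : (0:ℝ) ≤ B * 2^n := by positivity
    exact abs_le.mpr (abs_le_of_sq_le_sq' hkey hBn)
  have hpowinv : ((2:ℝ)⁻¹)^n * 2^n = 1 := by
    rw [← mul_pow]; norm_num
  have hjac1 : jacobiP α β n 1 = A := by
    rw [jacobiP_eq, eval_Qp_one, ← hAdef, mul_comm A, ← mul_assoc, hpowinv, one_mul]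
  have hjacx0 : |jacobiP α β n x0| ≤ B := by
    rw [jacobiP_eq, abs_mul]
    calc |((2:ℝ)⁻¹)^n| * |eval x0 (Qp α β n)| = ((2:ℝ)⁻¹)^n * |eval x0 (Qp α β n)| := by
          rw [abs_of_pos (by positivity)]
      _ ≤ ((2:ℝ)⁻¹)^n * (B * 2^n) := by
          apply mul_le_mul_of_nonneg_left habs (by positivity)
      _ = B := by rw [mul_comm B, ← mul_assoc, hpowinv, one_mul]
  have hratio : |jacobiP α β n x0 / jacobiP α β n 1| < 1 := by
    rw [hjac1, abs_div, abs_of_pos hApos, div_lt_one hApos]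
    exact lt_of_le_of_lt hjacx0 hBA
  have habspow : |(-1/(M-1))^ℓ| = (1/(M-1))^ℓ := by
    rw [abs_pow, abs_div, abs_neg, abs_one, abs_of_pos hM1pos]
  have hppos : (0:ℝ) < (1/(M-1))^ℓ := by positivity
  have hple : (1/(M-1))^ℓ ≤ (1/(M-1))^2 :=
    pow_le_pow_of_le_one (by positivity) (by rw [div_le_one hM1pos]; linarith) hl2
  calc |jacobiP α β n x0 / jacobiP α β n 1 * (-1/(M-1))^ℓ|
      = |jacobiP α β n x0 / jacobiP α β n 1| * (1/(M-1))^ℓ := by rw [abs_mul, habspow]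
    _ < 1 * (1/(M-1))^ℓ := by exact mul_lt_mul_of_pos_right hratio hppos
    _ = (1/(M-1))^ℓ := one_mul _
    _ ≤ (1/(M-1))^2 := hple
    _ = 1/(M-1)^2 := by rw [div_pow, one_pow]
end
end
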